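/- Let P be a probability distribution on {0,...,255}, α ∈ [0,1], Δ(b) = P(b) - 1/256, c² = ∑_b Δ(b)², and suppose 256·(1-α)·|Δ(b)| < 1 for all b. Then the KL divergence in bits of P_mix(b;α) = α/256 + (1-α)·P(b) from the uniform distribution satisfies D_KL(P_mix(α) ‖ U) ≤ (256/ln 2)·c²·(1-α)². -/
import Mathlib
set_option maxRecDepth 10000


theorem kl_mix_le_ceiling (P : Fin 256 → ℝ) (α : ℝ)
    (hP : ∀ b, 0 ≤ P b) (hsum : ∑ b, P b = 1)
    (hα0 : 0 ≤ α) (hα1 : α ≤ 1)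
    (hleak : ∀ b, 256 * (1-α) * |P b - 1/256| < 1) :
    ∑ b, (α/256 + (1-α) * P b) * Real.logb 2 (256 * (α/256 + (1-α) * P b))
      ≤ (256 / Real.log 2) * (∑ b, (P b - 1/256)^2) * (1-α)^2 := by
  have hlog2 : (0:ℝ) < Real.log 2 := Real.log_pos one_lt_two
  have hQ0 : ∀ b, 0 ≤ α/256 + (1-α) * P b := by
    intro b
    have := hP b
    nlinarith
  have key : ∀ b : Fin 256, (α/256 + (1-α) * P b) *
      Real.logb 2 (256 * (α/256 + (1-α) * P b)) ≤
      ((α/256 + (1-α) * P b) * (256 * (α/256 + (1-α) * P b) - 1)) / Real.log 2 := by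
    intro b
    rcases eq_or_lt_of_le (hQ0 b) with h | h
    · rw [← h]; simp
    · have hx : Real.log (256 * (α/256 + (1-α) * P b)) ≤
          256 * (α/256 + (1-α) * P b) - 1 :=
        Real.log_le_sub_one_of_pos (by positivity)
      rw [Real.logb, mul_div_assoc']
      have : (α/256 + (1-α) * P b) * Real.log (256 * (α/256 + (1-α) * P b)) ≤
          (α/256 + (1-α) * P b) * (256 * (α/256 + (1-α) * P b) - 1) :=
        mul_le_mul_of_nonneg_left hx h.le
      exact div_le_div_of_nonneg_right this hlog2.le
  have hΔ : ∑ b : Fin 256, (P b - 1/256) = 0 := by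
    rw [Finset.sum_sub_distrib, hsum]
    simp
  calc ∑ b, (α/256 + (1-α) * P b) * Real.logb 2 (256 * (α/256 + (1-α) * P b))
      ≤ ∑ b, ((α/256 + (1-α) * P b) * (256 * (α/256 + (1-α) * P b) - 1)) / Real.log 2 :=
        Finset.sum_le_sum fun b _ => key b
    _ = (256 / Real.log 2) * (∑ b, (P b - 1/256)^2) * (1-α)^2 := by
        rw [← Finset.sum_div]
        have : ∑ b : Fin 256, ((α/256 + (1-α) * P b) * (256 * (α/256 + (1-α) * P b) - 1))
            = (1-α) * (∑ b : Fin 256, (P b - 1/256))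
              + 256 * (1-α)^2 * ∑ b : Fin 256, (P b - 1/256)^2 := by
          rw [Finset.mul_sum, Finset.mul_sum, ← Finset.sum_add_distrib]
          exact Finset.sum_congr rfl fun b _ => by ring
        rw [this, hΔ]
        field_simp
        ring
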